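/- A finite quiver Q satisfies the exclusive condition (every two distinct oriented cycles are vertex-disjoint) if and only if its Kronecker square Q̂ satisfies the exclusive condition. -/

import Mathlib

structure Quiv where
  V : Type
  A : Type
  s : A → V
  t : A → V

namespace Quiv

/-- The Kronecker square of a quiver. -/
def kron (Q : Quiv) : Quiv where
  V := Q.V × Q.V
  A := Q.A × Q.A
  s := fun p => (Q.s p.1, Q.s p.2)
  t := fun p => (Q.t p.1, Q.t p.2)

instance toQuiver (Q : Quiv) : Quiver Q.V :=
  ⟨fun i j => {a : Q.A // Q.s a = i ∧ Q.t a = j}⟩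

/-- Paths of length `k` from `i` to `j`. -/
def PathN (Q : Quiv) (i j : Q.V) (k : ℕ) : Type :=
  {p : Quiver.Path i j // p.length = k}

end Quiv

namespace Quiv

variable {Q : Quiv}

/-- The list of arrows traversed by a path. -/
def arrowsOf : ∀ {i j : Q.V}, Quiver.Path i j → List Q.A
  | _, _, Quiver.Path.nil => []
  | _, _, Quiver.Path.cons p a => arrowsOf p ++ [a.1]

/-- The list of vertices visited by a path. -/
def vertsOf : ∀ {i j : Q.V}, Quiver.Path i j → List Q.V
  | i, _, Quiver.Path.nil => [i]
  | _, _, Quiver.Path.cons p a => vertsOf p ++ [Q.t a.1]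

/-- An (oriented) cycle of a quiver: a nontrivial path from a vertex to itself. -/
def Cycle (Q : Quiv) : Type :=
  Σ x : Q.V, {c : Quiver.Path x x // 0 < c.length}

/-- The arrows of a cycle, as a set. -/
def Cycle.arrowSet (c : Q.Cycle) : Set Q.A := {a | a ∈ arrowsOf c.2.1}

/-- The vertices of a cycle, as a set. -/
def Cycle.vertSet (c : Q.Cycle) : Set Q.V := {v | v ∈ vertsOf c.2.1}

end Quiv

/-- The exclusive condition: any two distinct oriented cycles (i.e., cycles with different
sets of arrows) are vertex-disjoint. -/
def Quiv.Exclusive (Q : Quiv) : Prop :=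
  ∀ c d : Q.Cycle, c.arrowSet ≠ d.arrowSet → c.vertSet ∩ d.vertSet = ∅

/-!
Call a quiver *cycle-deterministic* if two arrows that lie on cycles and have the same source
are equal. Exclusivity is equivalent to this: a first-return cycle through an arrow `a` leaves
`s a` only through `a`, so a second cyclic arrow at `s a` would give a distinct cycle meeting it;
conversely, in a cycle-deterministic quiver a closed walk through a vertex of a cycle is forced
to follow that cycle. An arrow `(p, q)` of `Q̂` on a cycle projects to arrows `p`, `q` on cycles
of `Q`, and the diagonal `a ↦ (a, a)` maps cycles of `Q` to cycles of `Q̂`, so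
cycle-determinism passes between `Q` and `Q̂` in both directions.
-/

namespace Quiv

variable {Q R : Quiv}

def IsWalk (Q : Quiv) : Q.V → List Q.A → Q.V → Prop
  | x, [], y => x = y
  | x, a :: l, y => Q.s a = x ∧ Q.IsWalk (Q.t a) l y

@[simp] lemma isWalk_nil {x y : Q.V} : Q.IsWalk x [] y ↔ x = y := Iff.rfl

@[simp] lemma isWalk_cons {x y : Q.V} {a : Q.A} {l : List Q.A} :
    Q.IsWalk x (a :: l) y ↔ Q.s a = x ∧ Q.IsWalk (Q.t a) l y := Iff.rfl

lemma isWalk_append {x y : Q.V} {l m : List Q.A} :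
    Q.IsWalk x (l ++ m) y ↔ ∃ z, Q.IsWalk x l z ∧ Q.IsWalk z m y := by
  induction l generalizing x with
  | nil => simp
  | cons a l ih => simp [ih, and_assoc]

lemma IsWalk.map (f : Q.A → R.A) (g : Q.V → R.V) (hs : ∀ a, R.s (f a) = g (Q.s a))
    (ht : ∀ a, R.t (f a) = g (Q.t a)) {l : List Q.A} {x y : Q.V} (h : Q.IsWalk x l y) :
    R.IsWalk (g x) (l.map f) (g y) := by
  induction l generalizing x with
  | nil => exact congrArg g h
  | cons a l ih => exact ⟨(hs a).trans (congrArg g h.1), ht a ▸ ih h.2⟩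

lemma IsWalk.cons_map_t {x y : Q.V} {l : List Q.A} (h : Q.IsWalk x l y) :
    x :: l.map Q.t = l.map Q.s ++ [y] := by
  induction l generalizing x with
  | nil => simpa using h
  | cons a l ih => simp [← h.1, ih h.2]

lemma IsWalk.mem_map_s_of_ne_nil {x : Q.V} {l : List Q.A} (h : Q.IsWalk x l x) (hl : l ≠ []) :
    x ∈ l.map Q.s := by
  obtain ⟨a, l, rfl⟩ := List.exists_cons_of_ne_nil hl
  simp [← h.1]

lemma IsWalk.mem_cons_map_t_iff {x v : Q.V} {l : List Q.A} (h : Q.IsWalk x l x)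
    (hl : l ≠ []) : v ∈ x :: l.map Q.t ↔ v ∈ l.map Q.s := by
  rw [h.cons_map_t, List.mem_append, List.mem_singleton]
  exact ⟨fun hv => hv.elim id fun hvx => hvx ▸ h.mem_map_s_of_ne_nil hl, Or.inl⟩

lemma IsWalk.t_mem_map_s {x : Q.V} {l : List Q.A} {a : Q.A} (h : Q.IsWalk x l x)
    (ha : a ∈ l) : Q.t a ∈ l.map Q.s :=
  (h.mem_cons_map_t_iff (List.ne_nil_of_mem ha)).1
    (List.mem_cons_of_mem _ (List.mem_map_of_mem ha))

lemma IsWalk.exists_rotate {x : Q.V} {l : List Q.A} {a : Q.A} (h : Q.IsWalk x l x)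
    (ha : a ∈ l) : ∃ r, Q.IsWalk (Q.t a) r (Q.s a) ∧ l.Perm (a :: r) := by
  obtain ⟨l₁, l₂, rfl⟩ := List.append_of_mem ha
  obtain ⟨z, h₁, hz, h₂⟩ := isWalk_append.1 h
  subst hz
  exact ⟨l₂ ++ l₁, isWalk_append.2 ⟨x, h₂, h₁⟩, List.perm_append_comm⟩

lemma IsWalk.takeWhile_s_ne [DecidableEq Q.V] {x y : Q.V} {l : List Q.A}
    (h : Q.IsWalk x l y) : Q.IsWalk x (l.takeWhile fun b => Q.s b ≠ y) y := by
  induction l generalizing x with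
  | nil => exact h
  | cons a l ih =>
    by_cases hay : Q.s a = y
    · rw [List.takeWhile_cons, if_neg (by simpa using hay)]
      exact h.1.symm.trans hay
    · rw [List.takeWhile_cons, if_pos (by simpa using hay)]
      exact ⟨h.1, ih h.2⟩

def OnCycle (Q : Quiv) (a : Q.A) : Prop :=
  ∃ r, Q.IsWalk (Q.t a) r (Q.s a)

lemma IsWalk.onCycle_of_mem {x : Q.V} {l : List Q.A} {a : Q.A} (h : Q.IsWalk x l x)
    (ha : a ∈ l) : Q.OnCycle a :=
  (h.exists_rotate ha).imp fun _ hr => hr.1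

lemma OnCycle.map (f : Q.A → R.A) (g : Q.V → R.V) (hs : ∀ a, R.s (f a) = g (Q.s a))
    (ht : ∀ a, R.t (f a) = g (Q.t a)) {a : Q.A} (h : Q.OnCycle a) : R.OnCycle (f a) := by
  obtain ⟨r, hr⟩ := h
  exact ⟨r.map f, ht a ▸ hs a ▸ hr.map f g hs ht⟩

lemma OnCycle.exists_firstReturn {a : Q.A} (h : Q.OnCycle a) :
    ∃ r, Q.IsWalk (Q.s a) (a :: r) (Q.s a) ∧ ∀ b ∈ r, Q.s b ≠ Q.s a := by
  classical
  obtain ⟨r, hr⟩ := h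
  exact ⟨_, ⟨rfl, hr.takeWhile_s_ne⟩, fun b hb => by simpa using List.mem_takeWhile_imp hb⟩

def CycleDeterministic (Q : Quiv) : Prop :=
  ∀ a b, Q.OnCycle a → Q.OnCycle b → Q.s a = Q.s b → a = b

lemma CycleDeterministic.subset_of_isWalk (hQ : Q.CycleDeterministic) {y : Q.V}
    {m : List Q.A} (hm : Q.IsWalk y m y) {l : List Q.A} (hl : ∀ a ∈ l, Q.OnCycle a) :
    ∀ {x z : Q.V}, Q.IsWalk x l z → x ∈ m.map Q.s → l ⊆ m := by
  induction l with
  | nil => exact fun _ _ => List.nil_subset m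
  | cons a l ih =>
    intro x z h hx
    obtain ⟨b, hb, hbx⟩ := List.mem_map.1 hx
    have hab : a = b :=
      hQ a b (hl a (List.mem_cons_self ..)) (hm.onCycle_of_mem hb) (h.1.trans hbx.symm)
    subst hab
    exact List.cons_subset.2 ⟨hb, ih (fun c hc => hl c (List.mem_cons_of_mem a hc)) h.2
      (hm.t_mem_map_s hb)⟩

lemma CycleDeterministic.subset (hQ : Q.CycleDeterministic) {x y v : Q.V}
    {l m : List Q.A} (hl : Q.IsWalk x l x) (hm : Q.IsWalk y m y) (hvl : v ∈ l.map Q.s)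
    (hvm : v ∈ m.map Q.s) : l ⊆ m := by
  obtain ⟨a, ha, rfl⟩ := List.mem_map.1 hvl
  obtain ⟨r, hr, hperm⟩ := hl.exists_rotate ha
  have har : Q.IsWalk (Q.s a) (a :: r) (Q.s a) := ⟨rfl, hr⟩
  exact List.Subset.trans hperm.subset
    (hQ.subset_of_isWalk hm (fun _ hc => har.onCycle_of_mem hc) har hvm)

lemma isWalk_arrowsOf {i j : Q.V} (p : Quiver.Path i j) : Q.IsWalk i (arrowsOf p) j := by
  induction p with
  | nil => simp [arrowsOf]
  | cons p a ih =>
    rw [arrowsOf]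
    exact isWalk_append.2 ⟨_, ih, isWalk_cons.2 ⟨a.2.1, isWalk_nil.2 a.2.2⟩⟩

lemma length_arrowsOf {i j : Q.V} (p : Quiver.Path i j) :
    (arrowsOf p).length = p.length := by
  induction p with
  | nil => simp [arrowsOf]
  | cons p a ih => simp [arrowsOf, ih]

lemma vertsOf_eq_cons {i j : Q.V} (p : Quiver.Path i j) :
    vertsOf p = i :: (arrowsOf p).map Q.t := by
  induction p with
  | nil => simp [arrowsOf, vertsOf]
  | cons p a ih => simp [arrowsOf, vertsOf, ih]

lemma arrowsOf_comp {i j k : Q.V} (p : Quiver.Path i j) (q : Quiver.Path j k) :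
    arrowsOf (p.comp q) = arrowsOf p ++ arrowsOf q := by
  induction q with
  | nil => simp [Quiver.Path.comp, arrowsOf]
  | cons q a ih => simp [Quiver.Path.comp, arrowsOf, ih]

lemma IsWalk.exists_arrowsOf_eq {l : List Q.A} {x y : Q.V} (h : Q.IsWalk x l y) :
    ∃ p : Quiver.Path x y, arrowsOf p = l := by
  induction l generalizing x with
  | nil =>
    subst h
    exact ⟨.nil, by simp [arrowsOf]⟩
  | cons a l ih =>
    obtain ⟨p, hp⟩ := ih h.2
    refine ⟨(Quiver.Hom.toPath (⟨a, h.1, rfl⟩ : x ⟶ Q.t a)).comp p, ?_⟩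
    simp [arrowsOf_comp, hp, Quiver.Hom.toPath, arrowsOf]

lemma IsWalk.exists_cycle {l : List Q.A} {x : Q.V} (h : Q.IsWalk x l x) (hl : l ≠ []) :
    ∃ c : Q.Cycle, arrowsOf c.2.1 = l := by
  obtain ⟨p, hp⟩ := h.exists_arrowsOf_eq
  have hpos : 0 < p.length := by
    rw [← length_arrowsOf, hp]
    exact List.length_pos_iff.2 hl
  exact ⟨⟨x, p, hpos⟩, hp⟩

lemma Cycle.mem_vertSet_iff (c : Q.Cycle) {v : Q.V} :
    v ∈ c.vertSet ↔ v ∈ (arrowsOf c.2.1).map Q.s := by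
  have hne : arrowsOf c.2.1 ≠ [] :=
    List.ne_nil_of_length_pos ((length_arrowsOf c.2.1).symm ▸ c.2.2)
  show v ∈ vertsOf c.2.1 ↔ _
  rw [vertsOf_eq_cons]
  exact (isWalk_arrowsOf c.2.1).mem_cons_map_t_iff hne

lemma exclusive_iff_subset : Q.Exclusive ↔ ∀ {x y v : Q.V} {l m : List Q.A},
    Q.IsWalk x l x → Q.IsWalk y m y → v ∈ l.map Q.s → v ∈ m.map Q.s → l ⊆ m := by
  constructor
  · intro hQ x y v l m hl hm hvl hvm
    obtain ⟨a, ha, -⟩ := List.mem_map.1 hvl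
    obtain ⟨b, hb, -⟩ := List.mem_map.1 hvm
    obtain ⟨c, rfl⟩ := hl.exists_cycle (List.ne_nil_of_mem ha)
    obtain ⟨d, rfl⟩ := hm.exists_cycle (List.ne_nil_of_mem hb)
    have hv : v ∈ c.vertSet ∩ d.vertSet := ⟨c.mem_vertSet_iff.2 hvl, d.mem_vertSet_iff.2 hvm⟩
    have hcd : c.arrowSet = d.arrowSet := by
      by_contra hne
      simp [hQ c d hne] at hv
    exact fun e he => (Set.ext_iff.1 hcd e).1 he
  · intro h c d hne
    refine Set.eq_empty_iff_forall_notMem.2 fun v ⟨hvc, hvd⟩ => hne ?_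
    have hc := isWalk_arrowsOf c.2.1
    have hd := isWalk_arrowsOf d.2.1
    rw [Cycle.mem_vertSet_iff] at hvc hvd
    exact Set.ext fun e => ⟨fun he => h hc hd hvc hvd he, fun he => h hd hc hvd hvc he⟩

lemma Exclusive.cycleDeterministic (hQ : Q.Exclusive) : Q.CycleDeterministic := by
  intro a b ha hb hab
  obtain ⟨r, hr, hr_s⟩ := ha.exists_firstReturn
  obtain ⟨rb, hrb⟩ := hb
  have hb_mem : b ∈ a :: r :=
    exclusive_iff_subset.1 hQ (show Q.IsWalk (Q.s b) (b :: rb) (Q.s b) from ⟨rfl, hrb⟩) hr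
      (List.mem_map_of_mem (List.mem_cons_self ..))
      (hab ▸ List.mem_map_of_mem (List.mem_cons_self ..)) (List.mem_cons_self ..)
  rcases List.mem_cons.1 hb_mem with rfl | hbr
  · rfl
  · exact absurd hab.symm (hr_s b hbr)

lemma exclusive_iff_cycleDeterministic : Q.Exclusive ↔ Q.CycleDeterministic :=
  ⟨Exclusive.cycleDeterministic, fun hQ => exclusive_iff_subset.2 hQ.subset⟩

lemma OnCycle.fst {p : Q.kron.A} (h : Q.kron.OnCycle p) : Q.OnCycle p.1 :=
  h.map Prod.fst Prod.fst (fun _ => rfl) (fun _ => rfl)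

lemma OnCycle.snd {p : Q.kron.A} (h : Q.kron.OnCycle p) : Q.OnCycle p.2 :=
  h.map Prod.snd Prod.snd (fun _ => rfl) (fun _ => rfl)

lemma OnCycle.diag {a : Q.A} (h : Q.OnCycle a) : Q.kron.OnCycle (a, a) :=
  h.map (R := Q.kron) (fun a => (a, a)) (fun v => (v, v)) (fun _ => rfl) (fun _ => rfl)

lemma cycleDeterministic_kron_iff : Q.kron.CycleDeterministic ↔ Q.CycleDeterministic := by
  constructor
  · intro h a b ha hb hab
    exact congrArg Prod.fst (h (a, a) (b, b) ha.diag hb.diag (by simp [kron, hab]))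
  · intro h p q hp hq hpq
    exact Prod.ext (h _ _ hp.fst hq.fst (congrArg Prod.fst hpq))
      (h _ _ hp.snd hq.snd (congrArg Prod.snd hpq))

end Quiv

theorem stmt16_general (Q : Quiv) :
    Q.Exclusive ↔ Q.kron.Exclusive := by
  rw [Quiv.exclusive_iff_cycleDeterministic, Quiv.exclusive_iff_cycleDeterministic,
    Quiv.cycleDeterministic_kron_iff]

/-- A finite quiver satisfies the exclusive condition iff its Kronecker square does. -/
theorem stmt16 (Q : Quiv) [Finite Q.V] [Finite Q.A] :
    Q.Exclusive ↔ Q.kron.Exclusive :=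
  stmt16_general Q
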